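/- arXiv:2403.04712 — 7 statements merged into one kernel-verified Lean document; each statement's English description precedes it below -/
import Mathlib

section
/- Let A be a real p×m matrix, V a p×p positive definite matrix, b ∈ ℝ^p, and let φ : ℝ^n → ℝ^m be any function. Suppose ξ_c ∈ ℝ, ξ_l ∈ ℝ^m, and a symmetric m×m matrix ξ_Q satisfy the vanishing identity ξ_c + 2 ξ_lᵀ φ(x) + φ(x)ᵀ ξ_Q φ(x) = 0 for all x ∈ ℝ^n. Assume S := Aᵀ V⁻¹ A + ξ_Q is positive definite and that there exists x̂ ∈ ℝ^n with φ(x̂) = S⁻¹ (Aᵀ V⁻¹ b − ξ_l). Then for every x ∈ ℝ^n, ‖A φ(x) − b‖²_{V⁻¹} = ‖φ(x) − φ(x̂)‖²_S + ρ̂, where ρ̂ := bᵀ V⁻¹ b + ξ_c − (Aᵀ V⁻¹ b − ξ_l)ᵀ S⁻¹ (Aᵀ V⁻¹ b − ξ_l). -/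
open Matrix

lemma swap_dp {k : ℕ} (M : Matrix (Fin k) (Fin k) ℝ) (hM : Mᵀ = M)
    (y z : Fin k → ℝ) : y ⬝ᵥ M.mulVec z = z ⬝ᵥ M.mulVec y := by
  rw [Matrix.dotProduct_mulVec, ← Matrix.mulVec_transpose, hM, dotProduct_comm]

/-- SOS Belief of Unconstrained BPUE (Theorem 3).  If the correction
polynomial `ξ_c + 2 ξ_lᵀ φ(x) + φ(x)ᵀ ξ_Q φ(x)` vanishes identically,
`S := Aᵀ V⁻¹ A + ξ_Q ≻ 0` and `φ(x̂) = S⁻¹ (Aᵀ V⁻¹ b − ξ_l)`, then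
`‖A φ(x) − b‖²_{V⁻¹} = ‖φ(x) − φ(x̂)‖²_S + ρ̂` for every `x`, with
`ρ̂ = bᵀ V⁻¹ b + ξ_c − (Aᵀ V⁻¹ b − ξ_l)ᵀ S⁻¹ (Aᵀ V⁻¹ b − ξ_l)`. -/
theorem bpue_sos_belief_unconstrained {p m n : ℕ}
    (A : Matrix (Fin p) (Fin m) ℝ) (V : Matrix (Fin p) (Fin p) ℝ) (b : Fin p → ℝ)
    (φ : (Fin n → ℝ) → (Fin m → ℝ))
    (hV : V.PosDef)
    (ξc : ℝ) (ξl : Fin m → ℝ) (ξQ : Matrix (Fin m) (Fin m) ℝ) (hξQ : ξQ.IsSymm)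
    (hvanish : ∀ x : Fin n → ℝ,
      ξc + 2 * (ξl ⬝ᵥ φ x) + φ x ⬝ᵥ ξQ.mulVec (φ x) = 0)
    (S : Matrix (Fin m) (Fin m) ℝ) (hS : S = Aᵀ * V⁻¹ * A + ξQ)
    (hSpd : S.PosDef)
    (xh : Fin n → ℝ)
    (hxh : φ xh = S⁻¹.mulVec ((Aᵀ * V⁻¹).mulVec b - ξl))
    (rh : ℝ)
    (hrh : rh = b ⬝ᵥ V⁻¹.mulVec b + ξc -
      ((Aᵀ * V⁻¹).mulVec b - ξl) ⬝ᵥ S⁻¹.mulVec ((Aᵀ * V⁻¹).mulVec b - ξl)) :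
    ∀ x : Fin n → ℝ,
      (A.mulVec (φ x) - b) ⬝ᵥ V⁻¹.mulVec (A.mulVec (φ x) - b) =
        (φ x - φ xh) ⬝ᵥ S.mulVec (φ x - φ xh) + rh := by
  intro x
  set u := φ x with hu
  set c := (Aᵀ * V⁻¹).mulVec b - ξl with hcdef
  have hVsym : (V⁻¹)ᵀ = V⁻¹ := by
    have := hV.inv.isHermitian
    simpa [Matrix.IsHermitian] using this
  have hSsym : Sᵀ = S := by
    have := hSpd.isHermitian
    simpa [Matrix.IsHermitian] using this
  have hSinv : S * S⁻¹ = 1 :=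
    Matrix.mul_nonsing_inv S (isUnit_iff_ne_zero.mpr (ne_of_gt hSpd.det_pos))
  set w := φ xh with hw
  have hSw : S.mulVec w = c := by
    rw [hxh, Matrix.mulVec_mulVec, hSinv, Matrix.one_mulVec]
  have h2 : b ⬝ᵥ V⁻¹.mulVec (A.mulVec u) = ((Aᵀ * V⁻¹).mulVec b) ⬝ᵥ u := by
    rw [Matrix.dotProduct_mulVec, ← Matrix.mulVec_transpose, hVsym,
      Matrix.dotProduct_mulVec, ← Matrix.mulVec_transpose, Matrix.mulVec_mulVec]
  have h3 : (A.mulVec u) ⬝ᵥ V⁻¹.mulVec b = ((Aᵀ * V⁻¹).mulVec b) ⬝ᵥ u := by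
    rw [swap_dp V⁻¹ hVsym, h2]
  have h1 : (A.mulVec u) ⬝ᵥ V⁻¹.mulVec (A.mulVec u)
      = u ⬝ᵥ (Aᵀ * V⁻¹ * A).mulVec u := by
    rw [Matrix.dotProduct_mulVec, Matrix.dotProduct_mulVec, Matrix.dotProduct_mulVec,
      ← Matrix.vecMul_transpose (A := A), Matrix.vecMul_vecMul, Matrix.vecMul_vecMul,
      Matrix.mul_assoc]
  have hSu : u ⬝ᵥ S.mulVec u = u ⬝ᵥ (Aᵀ * V⁻¹ * A).mulVec u + u ⬝ᵥ ξQ.mulVec u := by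
    rw [hS, Matrix.add_mulVec, dotProduct_add]
  have hwSu : w ⬝ᵥ S.mulVec u = c ⬝ᵥ u := by
    rw [swap_dp S hSsym, hSw]; exact dotProduct_comm _ _
  have huSw : u ⬝ᵥ S.mulVec w = c ⬝ᵥ u := by rw [hSw, dotProduct_comm]
  have hwSw : w ⬝ᵥ S.mulVec w = c ⬝ᵥ S⁻¹.mulVec c := by
    rw [hSw, hxh, dotProduct_comm]
  have hvan := hvanish x
  rw [← hu] at hvan
  have hcu : c ⬝ᵥ u = ((Aᵀ * V⁻¹).mulVec b) ⬝ᵥ u - ξl ⬝ᵥ u := by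
    rw [hcdef, sub_dotProduct]
  have lhs : (A.mulVec u - b) ⬝ᵥ V⁻¹.mulVec (A.mulVec u - b)
      = (A.mulVec u) ⬝ᵥ V⁻¹.mulVec (A.mulVec u)
        - b ⬝ᵥ V⁻¹.mulVec (A.mulVec u) - (A.mulVec u) ⬝ᵥ V⁻¹.mulVec b
        + b ⬝ᵥ V⁻¹.mulVec b := by
    rw [Matrix.mulVec_sub, sub_dotProduct, dotProduct_sub,
      dotProduct_sub]
    ring
  have rhs : (u - w) ⬝ᵥ S.mulVec (u - w)
      = u ⬝ᵥ S.mulVec u - u ⬝ᵥ S.mulVec w - w ⬝ᵥ S.mulVec u + w ⬝ᵥ S.mulVec w := by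
    rw [Matrix.mulVec_sub, sub_dotProduct, dotProduct_sub,
      dotProduct_sub]
    ring
  rw [lhs, rhs, h1, h2, h3, huSw, hwSu, hwSw, hSu, hrh, hcu]
  have hξu : ξl ⬝ᵥ u = u ⬝ᵥ ξl := dotProduct_comm _ _
  linarith [hvan]
end

section
/- Let m ≥ 1, let Σ be an m×m positive definite real matrix, and let φ̂ ∈ ℝ^m. Define the (1+m)×(1+m) symmetric block matrix Y with top-left 1×1 block φ̂ᵀ Σ⁻¹ φ̂, top-right 1×m block −(Σ⁻¹ φ̂)ᵀ, bottom-left m×1 block −Σ⁻¹ φ̂, and bottom-right m×m block Σ⁻¹. Then: (i) Y is positive semidefinite; (ii) rank(Y) = m; (iii) Y annihilates the vector v := (1, φ̂) ∈ ℝ^{1+m}, i.e., Y v = 0 and ⟨v vᵀ, Y⟩ = 0; and (iv) for every w ∈ ℝ^m, (1, w)ᵀ Y (1, w) = (w − φ̂)ᵀ Σ⁻¹ (w − φ̂). -/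
open Matrix

/-!
Write `L = [-φ̂ | I]` for the `m × (1 + m)` matrix of `(a, x) ↦ x - a φ̂`. Since `Σ⁻¹` is
symmetric, the certificate factors as `Y = Lᵀ Σ⁻¹ L`, and everything follows from this:
`Y` is a Gram matrix of the positive definite `Σ⁻¹`, hence positive semidefinite; `L` kills
`v = (1, φ̂)`, so `Y v = 0`; `L (1, w) = w - φ̂` gives the quadratic form; and since `L` has a
right inverse, `rank Y = rank Σ⁻¹ = m`.
-/

namespace Matrix

variable {n o R : Type*}

def centeringMatrix [Ring R] [DecidableEq n] (φ : n → R) : Matrix n (Unit ⊕ n) R :=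
  fromCols (replicateCol Unit (-φ)) 1

variable [Fintype n]

section CommRing

variable [CommRing R] [DecidableEq n]

theorem centeringMatrix_mulVec_sumElim (φ : n → R) (a : R) (x : n → R) :
    centeringMatrix φ *ᵥ Sum.elim (fun _ => a) x = x - a • φ := by
  rw [centeringMatrix, fromCols_mulVec, Sum.elim_comp_inl, Sum.elim_comp_inr, one_mulVec]
  ext i
  simp [replicateCol, mulVec, dotProduct, sub_eq_neg_add, mul_comm]

theorem centeringMatrix_mul_fromRows_zero_one (φ : n → R) :
    centeringMatrix φ * fromRows (0 : Matrix Unit n R) (1 : Matrix n n R) = 1 := by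
  simp [centeringMatrix, fromCols_mul_fromRows]

theorem fromBlocks_eq_transpose_centeringMatrix_mul_mul {A : Matrix n n R} (hA : A.IsSymm)
    (φ : n → R) :
    fromBlocks (of fun _ _ => φ ⬝ᵥ A *ᵥ φ) (of fun _ j => -(A *ᵥ φ) j)
        (of fun i _ => -(A *ᵥ φ) i) A =
      (centeringMatrix φ)ᵀ * A * centeringMatrix φ := by
  have hφA : φ ᵥ* A = A *ᵥ φ := by rw [← mulVec_transpose, hA.eq]
  rw [centeringMatrix, transpose_fromCols, fromRows_mul, fromRows_mul_fromCols]
  simp only [transpose_replicateCol, transpose_one, Matrix.one_mul, Matrix.mul_one,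
    ← replicateRow_vecMul, ← replicateCol_mulVec, neg_vecMul, mulVec_neg, hφA]
  congr 1
  ext
  simp [replicateRow_mulVec_eq_const, dotProduct_comm]

end CommRing

theorem dotProduct_transpose_mul_mul_mulVec [CommSemiring R] [Fintype o] (L : Matrix n o R)
    (A : Matrix n n R) (u : o → R) :
    u ⬝ᵥ (Lᵀ * A * L) *ᵥ u = (L *ᵥ u) ⬝ᵥ A *ᵥ (L *ᵥ u) := by
  rw [← mulVec_mulVec, ← mulVec_mulVec, mulVec_transpose, dotProduct_comm,
    ← dotProduct_mulVec, dotProduct_comm]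

theorem trace_transpose_vecMulVec_mul [CommSemiring R] (u w : n → R) (M : Matrix n n R) :
    trace ((vecMulVec u w)ᵀ * M) = (M *ᵥ w) ⬝ᵥ u := by
  rw [transpose_vecMulVec, trace_mul_comm, mul_vecMulVec, trace_vecMulVec]

theorem rank_transpose_mul_mul_of_mul_eq_one [CommSemiring R] [StrongRankCondition R] [Fintype o]
    [DecidableEq n] {L : Matrix n o R} {E : Matrix o n R} (hLE : L * E = 1) {A : Matrix n n R}
    (hA : IsUnit A) :
    (Lᵀ * A * L).rank = Fintype.card n := by
  refine le_antisymm ((rank_mul_le_right _ _).trans (rank_le_card_height L)) ?_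
  have hEYE : Eᵀ * (Lᵀ * A * L) * E = A := by
    calc Eᵀ * (Lᵀ * A * L) * E = (L * E)ᵀ * A * (L * E) := by
          simp only [transpose_mul, Matrix.mul_assoc]
      _ = A := by rw [hLE, transpose_one, Matrix.one_mul, Matrix.mul_one]
  calc Fintype.card n = A.rank := (rank_of_isUnit A hA).symm
    _ = (Eᵀ * (Lᵀ * A * L) * E).rank := by rw [hEYE]
    _ ≤ (Lᵀ * A * L).rank := (rank_mul_le_left _ _).trans (rank_mul_le_right _ _)

end Matrix

theorem sos_belief_dual_certificate_general {m : ℕ}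
    (Sg : Matrix (Fin m) (Fin m) ℝ) (hSg : Sg.PosDef)
    (φh : Fin m → ℝ)
    (Y : Matrix (Unit ⊕ Fin m) (Unit ⊕ Fin m) ℝ)
    (hY : Y = fromBlocks
      (Matrix.of fun _ _ => φh ⬝ᵥ (Sg⁻¹).mulVec φh)
      (Matrix.of fun _ j => -((Sg⁻¹).mulVec φh) j)
      (Matrix.of fun i _ => -((Sg⁻¹).mulVec φh) i)
      (Sg⁻¹))
    (v : Unit ⊕ Fin m → ℝ) (hv : v = Sum.elim (fun _ => (1 : ℝ)) φh) :
    Y.PosSemidef ∧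
    Y.rank = m ∧
    Y.mulVec v = 0 ∧
    trace ((vecMulVec v v)ᵀ * Y) = 0 ∧
    (∀ w : Fin m → ℝ,
      (Sum.elim (fun _ => (1 : ℝ)) w) ⬝ᵥ Y.mulVec (Sum.elim (fun _ => (1 : ℝ)) w) =
        (w - φh) ⬝ᵥ (Sg⁻¹).mulVec (w - φh)) := by
  have hA : Sg⁻¹.PosDef := hSg.inv
  set L := centeringMatrix φh
  obtain rfl : Y = Lᵀ * Sg⁻¹ * L :=
    hY.trans <| fromBlocks_eq_transpose_centeringMatrix_mul_mul
      (isHermitian_iff_isSymm.mp hA.isHermitian) φh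
  have hLv : L *ᵥ v = 0 := by
    rw [hv, centeringMatrix_mulVec_sumElim, one_smul, sub_self]
  have hYv : (Lᵀ * Sg⁻¹ * L) *ᵥ v = 0 := by
    rw [← mulVec_mulVec, hLv, mulVec_zero]
  refine ⟨?_, ?_, hYv, ?_, fun w => ?_⟩
  · simpa only [conjTranspose_eq_transpose_of_trivial] using
      hA.posSemidef.conjTranspose_mul_mul_same L
  · rw [rank_transpose_mul_mul_of_mul_eq_one (centeringMatrix_mul_fromRows_zero_one φh)
      hA.isUnit, Fintype.card_fin]
  · rw [trace_transpose_vecMulVec_mul, hYv, zero_dotProduct]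
  · rw [dotProduct_transpose_mul_mul_mulVec, centeringMatrix_mulVec_sumElim, one_smul]

/-- forward direction of Theorem 5.  The dual certificate matrix
`Y = [[φ̂ᵀ Σ⁻¹ φ̂, −(Σ⁻¹ φ̂)ᵀ], [−Σ⁻¹ φ̂, Σ⁻¹]]` built from an SOS belief is PSD,
has rank `m`, annihilates `v = (1, φ̂)` (so `Y v = 0` and `⟨v vᵀ, Y⟩ = 0`), and its
quadratic form on `(1, w)` is `(w − φ̂)ᵀ Σ⁻¹ (w − φ̂)`. -/
theorem sos_belief_dual_certificate {m : ℕ} (hm : 1 ≤ m)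
    (Sg : Matrix (Fin m) (Fin m) ℝ) (hSg : Sg.PosDef)
    (φh : Fin m → ℝ)
    (Y : Matrix (Unit ⊕ Fin m) (Unit ⊕ Fin m) ℝ)
    (hY : Y = fromBlocks
      (Matrix.of fun _ _ => φh ⬝ᵥ (Sg⁻¹).mulVec φh)
      (Matrix.of fun _ j => -((Sg⁻¹).mulVec φh) j)
      (Matrix.of fun i _ => -((Sg⁻¹).mulVec φh) i)
      (Sg⁻¹))
    (v : Unit ⊕ Fin m → ℝ) (hv : v = Sum.elim (fun _ => (1 : ℝ)) φh) :
    Y.PosSemidef ∧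
    Y.rank = m ∧
    Y.mulVec v = 0 ∧
    trace ((vecMulVec v v)ᵀ * Y) = 0 ∧
    (∀ w : Fin m → ℝ,
      (Sum.elim (fun _ => (1 : ℝ)) w) ⬝ᵥ Y.mulVec (Sum.elim (fun _ => (1 : ℝ)) w) =
        (w - φh) ⬝ᵥ (Sg⁻¹).mulVec (w - φh)) :=
  sos_belief_dual_certificate_general Sg hSg φh Y hY v hv
end

section
/- Let m ≥ 1, let Y be a (1+m)×(1+m) real symmetric positive semidefinite matrix with rank(Y) = m, and let φ̂ ∈ ℝ^m be such that ⟨v vᵀ, Y⟩ = 0 where v := (1, φ̂) ∈ ℝ^{1+m}. Write Y in blocks after the first row/column as Y = [[Y_c, Y_lᵀ], [Y_l, Y_Q]] with Y_c ∈ ℝ, Y_l ∈ ℝ^m, Y_Q an m×m matrix. Then Y_Q is positive definite, Y_l = −Y_Q φ̂, and Y_c = φ̂ᵀ Y_Q φ̂; equivalently, setting Σ := Y_Q⁻¹ (which is positive definite), Y equals the block matrix [[φ̂ᵀ Σ⁻¹ φ̂, −(Σ⁻¹ φ̂)ᵀ], [−Σ⁻¹ φ̂, Σ⁻¹]], and for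 every w ∈ ℝ^m, (1, w)ᵀ Y (1, w) = (w − φ̂)ᵀ Σ⁻¹ (w − φ̂). -/
/-!
Complementarity says `vᵀ Y v = 0`, so `Y v = 0` because `Y ⪰ 0`; as `rank Y = m`, the kernel of
`Y` is exactly the line through `v`. A vector `(0, z)` on which the form of `Y` vanishes lies in
that kernel, and its first coordinate forces it to be `0`; hence `Y_Q ≻ 0`. Reading `Y v = 0`
row by row gives `Y_l = -Y_Q φ̂` and `Y_c = φ̂ᵀ Y_Q φ̂`; finally, as `Y` is symmetric and kills
`v`, its form at `(1, w) = v + (0, w - φ̂)` is that of `Y_Q` at `w - φ̂`.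
-/

open Matrix

theorem Matrix.trace_transpose_vecMulVec_mul_s6 {n R : Type*} [Fintype n] [CommSemiring R]
    (v w : n → R) (Y : Matrix n n R) :
    trace ((vecMulVec v w)ᵀ * Y) = v ⬝ᵥ Y *ᵥ w := by
  rw [transpose_vecMulVec, vecMulVec_mul, trace_vecMulVec, dotProduct_comm, dotProduct_mulVec]

theorem Matrix.exists_smul_eq_of_mulVec_eq_zero_of_rank_add_one {m n K : Type*}
    [Fintype n] [Field K] {A : Matrix m n K} (hrank : A.rank + 1 = Fintype.card n) {v u : n → K}
    (hv : A *ᵥ v = 0) (hv₀ : v ≠ 0) (hu : A *ᵥ u = 0) : ∃ c : K, c • v = u := by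
  have hker : Module.finrank K (LinearMap.ker A.mulVecLin) = 1 := by
    have := A.mulVecLin.finrank_range_add_finrank_ker
    rw [Module.finrank_fintype_fun_eq_card, ← hrank, rank] at this
    omega
  obtain ⟨c, hc⟩ := (finrank_eq_one_iff_of_nonzero' (⟨v, hv⟩ : LinearMap.ker A.mulVecLin)
    (by simpa [Subtype.ext_iff] using hv₀)).mp hker ⟨u, hu⟩
  exact ⟨c, congrArg Subtype.val hc⟩

theorem Matrix.sumElim_zero_dotProduct_mulVec_sumElim_zero {l m n o R : Type*}
    [Fintype l] [Fintype m] [Fintype n] [Fintype o] [NonUnitalNonAssocSemiring R]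
    (Y : Matrix (l ⊕ m) (n ⊕ o) R) (x : m → R) (y : o → R) :
    Sum.elim 0 x ⬝ᵥ Y *ᵥ Sum.elim 0 y = x ⬝ᵥ Y.toBlocks₂₂ *ᵥ y := by
  conv_lhs => rw [← fromBlocks_toBlocks Y]
  simp [fromBlocks_mulVec, sumElim_dotProduct_sumElim]

open scoped ComplexOrder in
theorem Matrix.PosSemidef.posDef_toBlocks₂₂_of_ker {l n 𝕜 : Type*}
    [Fintype l] [Fintype n] [RCLike 𝕜] {Y : Matrix (l ⊕ n) (l ⊕ n) 𝕜} (hY : Y.PosSemidef)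
    (hker : ∀ z : n → 𝕜, Y *ᵥ Sum.elim 0 z = 0 → z = 0) : Y.toBlocks₂₂.PosDef := by
  have hD : Y.toBlocks₂₂.PosSemidef := hY.submatrix Sum.inr
  refine .of_dotProduct_mulVec_pos hD.isHermitian fun z hz => ?_
  refine (hD.dotProduct_mulVec_nonneg z).lt_of_ne fun h => hz (hker z ?_)
  have hstar : star (Sum.elim 0 z : l ⊕ n → 𝕜) = Sum.elim (0 : l → 𝕜) (star z) := by
    funext i; cases i <;> simp
  rw [← hY.dotProduct_mulVec_zero_iff, hstar, sumElim_zero_dotProduct_mulVec_sumElim_zero, ← h]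

theorem Matrix.add_dotProduct_mulVec_add_of_mulVec_eq_zero {n R : Type*}
    [Fintype n] [CommSemiring R] {Y : Matrix n n R} (hY : Y.IsSymm) {v : n → R}
    (hv : Y *ᵥ v = 0) (u : n → R) :
    (v + u) ⬝ᵥ Y *ᵥ (v + u) = u ⬝ᵥ Y *ᵥ u := by
  have hvY : v ᵥ* Y = 0 := by rw [← mulVec_transpose, hY.eq, hv]
  rw [mulVec_add, hv, zero_add, add_dotProduct, dotProduct_mulVec, hvY, zero_dotProduct, zero_add]

theorem Matrix.eq_fromBlocks_of_mulVec_sumElim_one_eq_zero {n R : Type*} [Fintype n] [CommRing R]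
    {Y : Matrix (Unit ⊕ n) (Unit ⊕ n) R} (hY : Y.IsSymm) {φ : n → R}
    (hker : Y *ᵥ Sum.elim (fun _ => 1) φ = 0) :
    Y = fromBlocks
      (of fun _ _ => φ ⬝ᵥ Y.toBlocks₂₂ *ᵥ φ)
      (of fun _ j => -(Y.toBlocks₂₂ *ᵥ φ) j)
      (of fun i _ => -(Y.toBlocks₂₂ *ᵥ φ) i)
      Y.toBlocks₂₂ := by
  have hrow : ∀ i, Y i (Sum.inl ()) + ∑ j, Y i (Sum.inr j) * φ j = 0 := fun i => by
    simpa [mulVec, dotProduct, Fintype.sum_sum_type] using congrFun hker i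
  have hcol : ∀ i, Y (Sum.inr i) (Sum.inl ()) = -(Y.toBlocks₂₂ *ᵥ φ) i := fun i => by
    rw [← add_eq_zero_iff_eq_neg]
    exact hrow (Sum.inr i)
  ext (⟨⟩ | i) (⟨⟩ | j)
  · have hsum : ∑ j, Y (Sum.inl ()) (Sum.inr j) * φ j = -(φ ⬝ᵥ Y.toBlocks₂₂ *ᵥ φ) := by
      rw [dotProduct, ← Finset.sum_neg_distrib]
      refine Finset.sum_congr rfl fun j _ => ?_
      rw [hY.apply (Sum.inr j) (Sum.inl ()), hcol]
      ring
    simpa [hsum, add_neg_eq_zero] using hrow (Sum.inl ())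
  · exact (hY.apply (Sum.inr j) (Sum.inl ())).trans (hcol j)
  · exact hcol i
  · rfl

theorem dual_solution_sos_belief_form_general {m : ℕ}
    (Y : Matrix (Unit ⊕ Fin m) (Unit ⊕ Fin m) ℝ)
    (hYpsd : Y.PosSemidef) (hYrank : Y.rank = m)
    (φh : Fin m → ℝ)
    (v : Unit ⊕ Fin m → ℝ) (hv : v = Sum.elim (fun _ => (1 : ℝ)) φh)
    (hcompl : trace ((vecMulVec v v)ᵀ * Y) = 0) :
    (Y.toBlocks₂₂).PosDef ∧
    (∀ i : Fin m, Y (Sum.inr i) (Sum.inl ()) = -((Y.toBlocks₂₂).mulVec φh) i) ∧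
    Y (Sum.inl ()) (Sum.inl ()) = φh ⬝ᵥ (Y.toBlocks₂₂).mulVec φh ∧
    ((Y.toBlocks₂₂)⁻¹).PosDef ∧
    Y = fromBlocks
      (Matrix.of fun _ _ => φh ⬝ᵥ (((Y.toBlocks₂₂)⁻¹)⁻¹).mulVec φh)
      (Matrix.of fun _ j => -((((Y.toBlocks₂₂)⁻¹)⁻¹).mulVec φh) j)
      (Matrix.of fun i _ => -((((Y.toBlocks₂₂)⁻¹)⁻¹).mulVec φh) i)
      (((Y.toBlocks₂₂)⁻¹)⁻¹) ∧
    (∀ w : Fin m → ℝ,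
      (Sum.elim (fun _ => (1 : ℝ)) w) ⬝ᵥ Y.mulVec (Sum.elim (fun _ => (1 : ℝ)) w) =
        (w - φh) ⬝ᵥ (((Y.toBlocks₂₂)⁻¹)⁻¹).mulVec (w - φh)) := by
  have hYsymm : Y.IsSymm := isHermitian_iff_isSymm.mp hYpsd.isHermitian
  have hker : Y *ᵥ v = 0 := (hYpsd.dotProduct_mulVec_zero_iff v).mp <| by
    rwa [star_trivial, ← trace_transpose_vecMulVec_mul_s6]
  have hkerline : ∀ u, Y *ᵥ u = 0 → ∃ c : ℝ, c • v = u :=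
    fun u => exists_smul_eq_of_mulVec_eq_zero_of_rank_add_one (by simp [hYrank, add_comm]) hker
      (fun h => by simpa [hv] using congrFun h (Sum.inl ()))
  have hD : Y.toBlocks₂₂.PosDef := hYpsd.posDef_toBlocks₂₂_of_ker fun z hz => by
    obtain ⟨c, hc⟩ := hkerline _ hz
    have hc₀ : c = 0 := by simpa [hv] using congrFun hc (Sum.inl ())
    funext i
    simpa [hv, hc₀] using (congrFun hc (Sum.inr i)).symm
  have hblock := eq_fromBlocks_of_mulVec_sumElim_one_eq_zero hYsymm (hv ▸ hker)
  rw [nonsing_inv_nonsing_inv _ ((isUnit_iff_isUnit_det _).mp hD.isUnit)]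
  refine ⟨hD, fun i => congrFun (congrFun hblock (Sum.inr i)) (Sum.inl ()),
    congrFun (congrFun hblock (Sum.inl ())) (Sum.inl ()), hD.inv, hblock, fun w => ?_⟩
  have hsplit : Sum.elim (fun _ => (1 : ℝ)) w = v + Sum.elim (0 : Unit → ℝ) (w - φh) := by
    funext i; cases i <;> simp [hv]
  rw [hsplit, add_dotProduct_mulVec_add_of_mulVec_eq_zero hYsymm hker,
    sumElim_zero_dotProduct_mulVec_sumElim_zero]

/-- reverse direction of Theorem 5.  A symmetric PSD dual solution `Y` of
corank 1 that is complementary to the rank-1 moment matrix `v vᵀ`, `v = (1, φ̂)`,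
necessarily has the SOS-belief block form: its bottom-right block `Y_Q` is positive
definite, `Y_l = −Y_Q φ̂`, `Y_c = φ̂ᵀ Y_Q φ̂`; equivalently, with `Σ := Y_Q⁻¹ ≻ 0`,
`Y = [[φ̂ᵀ Σ⁻¹ φ̂, −(Σ⁻¹ φ̂)ᵀ], [−Σ⁻¹ φ̂, Σ⁻¹]]` and the quadratic form of `Y` on
`(1, w)` is `(w − φ̂)ᵀ Σ⁻¹ (w − φ̂)`. -/
theorem dual_solution_sos_belief_form {m : ℕ} (hm : 1 ≤ m)
    (Y : Matrix (Unit ⊕ Fin m) (Unit ⊕ Fin m) ℝ)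
    (hYsymm : Y.IsSymm) (hYpsd : Y.PosSemidef) (hYrank : Y.rank = m)
    (φh : Fin m → ℝ)
    (v : Unit ⊕ Fin m → ℝ) (hv : v = Sum.elim (fun _ => (1 : ℝ)) φh)
    (hcompl : trace ((vecMulVec v v)ᵀ * Y) = 0) :
    (Y.toBlocks₂₂).PosDef ∧
    (∀ i : Fin m, Y (Sum.inr i) (Sum.inl ()) = -((Y.toBlocks₂₂).mulVec φh) i) ∧
    Y (Sum.inl ()) (Sum.inl ()) = φh ⬝ᵥ (Y.toBlocks₂₂).mulVec φh ∧
    ((Y.toBlocks₂₂)⁻¹).PosDef ∧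
    Y = fromBlocks
      (Matrix.of fun _ _ => φh ⬝ᵥ (((Y.toBlocks₂₂)⁻¹)⁻¹).mulVec φh)
      (Matrix.of fun _ j => -((((Y.toBlocks₂₂)⁻¹)⁻¹).mulVec φh) j)
      (Matrix.of fun i _ => -((((Y.toBlocks₂₂)⁻¹)⁻¹).mulVec φh) i)
      (((Y.toBlocks₂₂)⁻¹)⁻¹) ∧
    (∀ w : Fin m → ℝ,
      (Sum.elim (fun _ => (1 : ℝ)) w) ⬝ᵥ Y.mulVec (Sum.elim (fun _ => (1 : ℝ)) w) =
        (w - φh) ⬝ᵥ (((Y.toBlocks₂₂)⁻¹)⁻¹).mulVec (w - φh)) :=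
  dual_solution_sos_belief_form_general Y hYpsd hYrank φh v hv hcompl
end

section
/- Let m ≥ 1 and let Y be a (1+m)×(1+m) real symmetric positive semidefinite matrix with rank(Y) = m. Let u ∈ ℝ^{1+m} be a nonzero vector with Y u = 0 and first component u₁ = 1. Then for every (1+m)×(1+m) real symmetric positive semidefinite matrix X with X₁₁ = 1 and ⟨X, Y⟩ = 0, one has X = u uᵀ; in particular such an X is unique and has rank 1. -/
/-!
Write `X = Pᴴ P` and `Y = Qᴴ Q`. Then `⟨X, Y⟩ = ‖P Qᴴ‖²_F`, so complementarity forces `Y X = 0`: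
every column of `X` lies in `ker Y`, which the rank condition makes the line through `u`.
Hence `X = u wᵀ`, and symmetry together with `X₁₁ = u₁ = 1` gives `w = u`.
-/

open Matrix

open scoped MatrixOrder ComplexOrder in
theorem Matrix.PosSemidef.mul_eq_zero_of_trace_mul_eq_zero {n 𝕜 : Type*} [Fintype n] [RCLike 𝕜]
    {A B : Matrix n n 𝕜} (hA : A.PosSemidef) (hB : B.PosSemidef) (h : trace (A * B) = 0) :
    A * B = 0 := by
  classical
  obtain ⟨P, rfl⟩ := CStarAlgebra.nonneg_iff_eq_star_mul_self.mp hA.nonneg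
  obtain ⟨Q, rfl⟩ := CStarAlgebra.nonneg_iff_eq_star_mul_self.mp hB.nonneg
  simp only [star_eq_conjTranspose] at h ⊢
  have hPQ : P * Qᴴ = 0 := by
    rw [← trace_conjTranspose_mul_self_eq_zero_iff, ← h, conjTranspose_mul,
      conjTranspose_conjTranspose, Matrix.mul_assoc, trace_mul_comm Q]
    simp only [Matrix.mul_assoc]
  rw [Matrix.mul_assoc, ← Matrix.mul_assoc P, hPQ, Matrix.zero_mul, Matrix.mul_zero]

theorem Matrix.ker_mulVecLin_eq_span_singleton {n K : Type*} [Fintype n] [Field K]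
    {Y : Matrix n n K} (hY : Y.rank + 1 = Fintype.card n) {u : n → K} (hu : u ≠ 0)
    (hYu : Y *ᵥ u = 0) : LinearMap.ker Y.mulVecLin = K ∙ u := by
  have hker : Module.finrank K (LinearMap.ker Y.mulVecLin) = 1 := by
    have := LinearMap.finrank_range_add_finrank_ker Y.mulVecLin
    rw [Module.finrank_fintype_fun_eq_card, ← hY] at this
    exact Nat.add_left_cancel this
  refine (Submodule.eq_of_le_of_finrank_eq ?_ ?_).symm
  · rwa [Submodule.span_le, Set.singleton_subset_iff]
  · rw [finrank_span_singleton hu, hker]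

theorem Matrix.exists_eq_vecMulVec_of_mul_eq_zero {n K : Type*} [Fintype n] [Field K]
    {Y X : Matrix n n K} {u : n → K} (hker : LinearMap.ker Y.mulVecLin = K ∙ u)
    (hYX : Y * X = 0) : ∃ w, X = vecMulVec u w := by
  have hcol : ∀ j, ∃ c : K, c • u = fun i => X i j := fun j => by
    rw [← Submodule.mem_span_singleton, ← hker, LinearMap.mem_ker]
    funext i
    exact congrFun (congrFun hYX i) j
  choose w hw using hcol
  refine ⟨w, ?_⟩
  ext i j
  rw [vecMulVec_apply, ← congrFun (hw j) i, Pi.smul_apply, smul_eq_mul, mul_comm]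

theorem Matrix.vecMulVec_eq_of_isSymm {n R : Type*} [CommRing R] {u w : n → R} {i₀ : n}
    (hsymm : (vecMulVec u w).IsSymm) (hu : u i₀ = 1) (hw : vecMulVec u w i₀ i₀ = 1) :
    vecMulVec u w = vecMulVec u u := by
  have hw₀ : w i₀ = 1 := by simpa [vecMulVec_apply, hu] using hw
  have hwu : w = u := funext fun j => by
    simpa [vecMulVec_apply, hu, hw₀] using (hsymm.apply i₀ j).symm
  rw [hwu]

theorem primal_moment_matrix_unique_general {m : ℕ}
    (Y : Matrix (Fin (1 + m)) (Fin (1 + m)) ℝ)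
    (hYpsd : Y.PosSemidef) (hYrank : Y.rank = m)
    (u : Fin (1 + m) → ℝ) (hu : u ≠ 0) (hYu : Y.mulVec u = 0)
    (hu1 : u ⟨0, Nat.lt_of_lt_of_le Nat.one_pos (Nat.le_add_right 1 m)⟩ = 1) :
    ∀ X : Matrix (Fin (1 + m)) (Fin (1 + m)) ℝ,
      X.PosSemidef →
      X ⟨0, Nat.lt_of_lt_of_le Nat.one_pos (Nat.le_add_right 1 m)⟩
        ⟨0, Nat.lt_of_lt_of_le Nat.one_pos (Nat.le_add_right 1 m)⟩ = 1 →
      trace (Xᵀ * Y) = 0 →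
      X = vecMulVec u u := by
  intro X hX hX₀₀ htr
  have hXsymm : X.IsSymm := hX.isHermitian
  have hYX : Y * X = 0 := by
    rw [hXsymm.eq, trace_mul_comm] at htr
    exact hYpsd.mul_eq_zero_of_trace_mul_eq_zero hX htr
  have hker := ker_mulVecLin_eq_span_singleton (by simp [hYrank, add_comm]) hu hYu
  obtain ⟨w, rfl⟩ := exists_eq_vecMulVec_of_mul_eq_zero hker hYX
  exact vecMulVec_eq_of_isSymm hXsymm hu1 hX₀₀

/-- uniqueness of the primal moment matrix.  If `Y ⪰ 0` has size `1+m`,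
rank `m`, and `u ≠ 0` with `Y u = 0` and first component `u₁ = 1`, then every PSD
matrix `X` with `X₁₁ = 1` and `⟨X, Y⟩ = 0` equals `u uᵀ`; in particular it is unique
and has rank 1. -/
theorem primal_moment_matrix_unique {m : ℕ} (hm : 1 ≤ m)
    (Y : Matrix (Fin (1 + m)) (Fin (1 + m)) ℝ)
    (hYpsd : Y.PosSemidef) (hYrank : Y.rank = m)
    (u : Fin (1 + m) → ℝ) (hu : u ≠ 0) (hYu : Y.mulVec u = 0)
    (hu1 : u ⟨0, Nat.lt_of_lt_of_le Nat.one_pos (Nat.le_add_right 1 m)⟩ = 1) :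
    ∀ X : Matrix (Fin (1 + m)) (Fin (1 + m)) ℝ,
      X.PosSemidef →
      X ⟨0, Nat.lt_of_lt_of_le Nat.one_pos (Nat.le_add_right 1 m)⟩
        ⟨0, Nat.lt_of_lt_of_le Nat.one_pos (Nat.le_add_right 1 m)⟩ = 1 →
      trace (Xᵀ * Y) = 0 →
      X = vecMulVec u u :=
  primal_moment_matrix_unique_general Y hYpsd hYrank u hu hYu hu1
end

section
/- Fix positive integers n and r, and let I := { α : Fin n → ℕ | Σᵢ αᵢ ≤ r } be the set of exponent multi-indices of degree at most r. For x ∈ ℝ^n define v_r(x) ∈ ℝ^I by (v_r(x))_α := Πᵢ xᵢ^{αᵢ}. Let Y₁ and Y₂ be real symmetric matrices indexed by I × I such that v_r(x)ᵀ Y₁ v_r(x) = v_r(x)ᵀ Y₂ v_r(x) for all x ∈ ℝ^n. Then for every multi-index γ : Fin n → ℕ with Σᵢ γᵢ ≤ 2r, the sum of (Y₁ − Y₂)_{α,β} over all pairs (α, β) ∈ I × I with α + β = γ equals 0. -/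
open Matrix

/-- Multi-indices `α : Fin n → ℕ` (encoded with values in `Fin (r+1)`, which is no
restriction since `∑ i, α i ≤ r` forces each `α i ≤ r`) of total degree at most `r`. -/
abbrev MIdx (n r : ℕ) : Type := {α : Fin n → Fin (r + 1) // ∑ i, (α i : ℕ) ≤ r}

/-- The canonical monomial basis vector `v_r(x)`, `(v_r(x))_α = ∏ i, x i ^ α i`. -/
def vr {n r : ℕ} (x : Fin n → ℝ) : MIdx n r → ℝ := fun α => ∏ i, x i ^ ((α.1 i : ℕ))

/-- Lemma 7, Equivalent SOS Polynomial Descriptions: if two symmetric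
matrices indexed by the monomial basis induce the same polynomial quadratic form,
then for every multi-index `γ` with `∑ γ ≤ 2r`, the sum of the entries of `Y₁ − Y₂`
over all pairs `(α, β)` with `α + β = γ` vanishes. -/
theorem equivalent_sos_descriptions (n r : ℕ) (hn : 0 < n) (hr : 0 < r)
    (Y₁ Y₂ : Matrix (MIdx n r) (MIdx n r) ℝ)
    (hY₁ : Y₁.IsSymm) (hY₂ : Y₂.IsSymm)
    (h : ∀ x : Fin n → ℝ, vr x ⬝ᵥ Y₁.mulVec (vr x) = vr x ⬝ᵥ Y₂.mulVec (vr x)) :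
    ∀ γ : Fin n → ℕ, (∑ i, γ i) ≤ 2 * r →
      ∑ α : MIdx n r, ∑ β : MIdx n r,
        (if (fun i => (α.1 i : ℕ) + (β.1 i : ℕ)) = γ then (Y₁ - Y₂) α β else 0) = 0 := by
  intro γ _
  set D := Y₁ - Y₂ with hD
  set p : MvPolynomial (Fin n) ℝ :=
    ∑ α : MIdx n r, ∑ β : MIdx n r,
      MvPolynomial.monomial
        (Finsupp.equivFunOnFinite.symm fun i => (α.1 i : ℕ) + (β.1 i : ℕ)) (D α β) with hp
  have heval : ∀ x : Fin n → ℝ, MvPolynomial.eval x p = 0 := by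
    intro x
    have hx := h x
    have : MvPolynomial.eval x p
        = vr x ⬝ᵥ Y₁.mulVec (vr x) - vr x ⬝ᵥ Y₂.mulVec (vr x) := by
      simp only [hp, map_sum, MvPolynomial.eval_monomial, dotProduct, mulVec,
        Finset.mul_sum, ← Finset.sum_sub_distrib]
      refine Finset.sum_congr rfl fun α _ => Finset.sum_congr rfl fun β _ => ?_
      have hf : (Finsupp.equivFunOnFinite.symm fun i => (α.1 i : ℕ) + (β.1 i : ℕ)).prod
          (fun i e => x i ^ e) = ∏ i, x i ^ ((α.1 i : ℕ) + (β.1 i : ℕ)) :=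
        Finsupp.prod_fintype _ _ (fun i => pow_zero _)
      rw [hf]
      simp only [hD, Matrix.sub_apply, vr, pow_add, ← Finset.prod_mul_distrib]
      rw [Finset.prod_mul_distrib]; ring
    rw [this, hx, sub_self]
  have hp0 : p = 0 := by
    apply MvPolynomial.funext
    intro x
    simp [heval x]
  have hc := congrArg (MvPolynomial.coeff (Finsupp.equivFunOnFinite.symm γ)) hp0
  simp only [hp, MvPolynomial.coeff_sum, MvPolynomial.coeff_monomial,
    MvPolynomial.coeff_zero, EmbeddingLike.apply_eq_iff_eq] at hc
  exact hc
end

section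
/- Fix positive integers n and r, and let I := { α : Fin n → ℕ | Σᵢ αᵢ ≤ r }. For α ∈ I let e_α be the corresponding standard basis vector of ℝ^I and set E_{α,β} := e_α e_βᵀ + e_β e_αᵀ. For γ : Fin n → ℕ with Σᵢ γᵢ ≤ 2r, let D(γ) := { (α, β) ∈ I × I | α + β = γ }, C_γ := |D(γ)|, and define B_γ := (1/C_γ) Σ_{(α,β) ∈ D(γ)} e_α e_βᵀ. Let ᾱ(γ) be the lexicographically smallest α ∈ I with γ − α ∈ I, and β̄(γ) := γ − ᾱ(γ); for every α ∈ I with γ − α ∈ I and α ≠ ᾱ(γ) define B⊥_{γ,α} := E_{ᾱ(γ), β̄(γ)} − E_{α, γ−α}. Then for all admissible γ, γ', α one has ⟨B⊥_{γ,α}, B_{γ'}⟩ = 0, i.e., the family {B_γ} is orthogonal to the family {B⊥_{γ,α}} with respect to the trace inner product. -/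
open Matrix

/-- Standard basis vector `e_α` of `ℝ^I`. -/
def eVec {n r : ℕ} (α : MIdx n r) : MIdx n r → ℝ := fun β => if β = α then 1 else 0

/-- `E_{α,β} := e_α e_βᵀ + e_β e_αᵀ`. -/
def Emat {n r : ℕ} (α β : MIdx n r) : Matrix (MIdx n r) (MIdx n r) ℝ :=
  vecMulVec (eVec α) (eVec β) + vecMulVec (eVec β) (eVec α)

/-- The sum `α + β` of two multi-indices, as a function `Fin n → ℕ`. -/
def addIdx {n r : ℕ} (α β : MIdx n r) : Fin n → ℕ := fun i => (α.1 i : ℕ) + (β.1 i : ℕ)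

/-- `D(γ) := {(α, β) ∈ I × I | α + β = γ}`. -/
def Dset (n r : ℕ) (γ : Fin n → ℕ) : Finset (MIdx n r × MIdx n r) :=
  Finset.univ.filter (fun p => addIdx p.1 p.2 = γ)

/-- `B_γ := (1/C_γ) ∑_{(α,β) ∈ D(γ)} e_α e_βᵀ` where `C_γ = |D(γ)|`. -/
noncomputable def Bmat (n r : ℕ) (γ : Fin n → ℕ) : Matrix (MIdx n r) (MIdx n r) ℝ :=
  (((Dset n r γ).card : ℝ))⁻¹ • ∑ p ∈ Dset n r γ, vecMulVec (eVec p.1) (eVec p.2)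

/-- `B⊥_{γ,α} := E_{ᾱ(γ), β̄(γ)} − E_{α, γ−α}`, given `ᾱ(γ) + β̄(γ) = γ = α + β`. -/
def Bperp {n r : ℕ} (αb βb α β : MIdx n r) : Matrix (MIdx n r) (MIdx n r) ℝ :=
  Emat αb βb - Emat α β

/-- Strict lexicographic order on multi-indices. -/
def lexLt {n r : ℕ} (f g : Fin n → Fin (r + 1)) : Prop :=
  ∃ i, (∀ j, j < i → f j = g j) ∧ f i < g i

/-- Lexicographic order on multi-indices. -/
def lexLe {n r : ℕ} (f g : Fin n → Fin (r + 1)) : Prop := f = g ∨ lexLt f g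

lemma trace_vmv {m : Type*} [Fintype m] (u v x y : m → ℝ) :
    trace ((vecMulVec u v)ᵀ * vecMulVec x y) = (u ⬝ᵥ x) * (v ⬝ᵥ y) := by
  simp only [trace, Matrix.mul_apply, vecMulVec_apply, transpose_apply, diag_apply,
    dotProduct, Finset.sum_mul_sum]
  rw [Finset.sum_comm]
  congr 1; ext i; congr 1; ext j; ring

lemma dot_eVec {n r : ℕ} (a c : MIdx n r) :
    eVec a ⬝ᵥ eVec c = if a = c then (1:ℝ) else 0 := by
  by_cases h : a = c <;> simp [eVec, dotProduct, h, Finset.sum_ite_eq, eq_comm]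

lemma addIdx_comm {n r : ℕ} (a b : MIdx n r) : addIdx a b = addIdx b a := by
  funext i; simp [addIdx, Nat.add_comm]

lemma trace_Emat {n r : ℕ} (a b : MIdx n r) (γ' : Fin n → ℕ) :
    trace ((Emat a b)ᵀ * Bmat n r γ') =
      (((Dset n r γ').card : ℝ))⁻¹ * (2 * if addIdx a b = γ' then 1 else 0) := by
  have key : ∀ u v : MIdx n r → ℝ,
      trace ((vecMulVec u v)ᵀ * Bmat n r γ') =
        (((Dset n r γ').card : ℝ))⁻¹ *
          ∑ p ∈ Dset n r γ', (u ⬝ᵥ eVec p.1) * (v ⬝ᵥ eVec p.2) := by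
    intro u v
    simp only [Bmat, Matrix.mul_smul, trace_smul, Matrix.mul_sum, trace_sum, smul_eq_mul]
    exact congrArg (HMul.hMul _) (Finset.sum_congr rfl fun p _ =>
      trace_vmv u v (eVec p.1) (eVec p.2))
  have hmem : ∀ a b : MIdx n r, ((a,b) ∈ Dset n r γ') ↔ addIdx a b = γ' := by
    intro a b; simp [Dset]
  have hsum : ∀ a b : MIdx n r,
      (∑ p ∈ Dset n r γ', (eVec a ⬝ᵥ eVec p.1) * (eVec b ⬝ᵥ eVec p.2)) =
        if addIdx a b = γ' then 1 else 0 := by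
    intro a b
    by_cases hab : addIdx a b = γ'
    · rw [if_pos hab, Finset.sum_eq_single (a, b)]
      · simp [dot_eVec]
      · rintro ⟨c, d⟩ _ hne
        simp only [dot_eVec]
        by_cases h1 : a = c
        · by_cases h2 : b = d
          · exact absurd (by rw [h1, h2]) hne
          · simp [h2]
        · simp [h1]
      · intro h
        exact absurd ((hmem a b).2 hab) h
    · rw [if_neg hab]
      apply Finset.sum_eq_zero
      rintro ⟨c, d⟩ hcd
      simp only [dot_eVec]
      by_cases h1 : a = c
      · by_cases h2 : b = d
        · exact absurd (h1 ▸ h2 ▸ (hmem c d).1 hcd) hab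
        · simp [h2]
      · simp [h1]
  simp only [Emat, transpose_add, Matrix.add_mul, trace_add, key, hsum,
    addIdx_comm b a]
  ring

/-- orthogonality part of Lemma 6: with `ᾱ(γ)` the lexicographically
smallest `α ∈ I` such that `γ − α ∈ I` and `β̄(γ) := γ − ᾱ(γ)`, the matrices
`B⊥_{γ,α}` are orthogonal to all the matrices `B_{γ'}` in the trace inner product. -/
theorem B_orthogonality (n r : ℕ) (hn : 0 < n) (hr : 0 < r)
    (αb βb : (Fin n → ℕ) → MIdx n r)
    (hdecomp : ∀ γ : Fin n → ℕ, (∑ i, γ i) ≤ 2 * r →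
      (∃ α β : MIdx n r, addIdx α β = γ) → addIdx (αb γ) (βb γ) = γ)
    (hmin : ∀ γ : Fin n → ℕ, (∑ i, γ i) ≤ 2 * r →
      ∀ α β : MIdx n r, addIdx α β = γ → lexLe (αb γ).1 α.1) :
    ∀ γ γ' : Fin n → ℕ, (∑ i, γ i) ≤ 2 * r → (∑ i, γ' i) ≤ 2 * r →
      ∀ α β : MIdx n r, addIdx α β = γ → α ≠ αb γ →
        trace ((Bperp (αb γ) (βb γ) α β)ᵀ * Bmat n r γ') = 0 := by
  intro γ γ' hγ hγ' α β hαβ hne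
  have hd : addIdx (αb γ) (βb γ) = γ := hdecomp γ hγ ⟨α, β, hαβ⟩
  simp only [Bperp, transpose_sub, Matrix.sub_mul, trace_sub, trace_Emat, hd, hαβ]
  ring
end

section
/- Let A be a real p×m matrix, V a p×p positive definite matrix, b ∈ ℝ^p, φ : ℝ^n → ℝ^m a function, and g_j : ℝ^n → ℝ, h_j : ℝ^n → ℝ for j = 1, …, s. Suppose ξ_c ∈ ℝ, ξ_l ∈ ℝ^m, and a symmetric m×m matrix ξ_Q satisfy ξ_c + 2 ξ_lᵀ φ(x) + φ(x)ᵀ ξ_Q φ(x) = Σ_{j=1}^{s} h_j(x) g_j(x) for all x ∈ ℝ^n. Assume S := Aᵀ V⁻¹ A + ξ_Q is positive definite and there exists x̂ ∈ ℝ^n with φ(x̂) = S⁻¹ (Aᵀ V⁻¹ b − ξ_l). Then for every x ∈ ℝ^n satisfying g_j(x) = 0 for all j, one has ‖A φ(x) − b‖²_{V⁻¹} = ‖φ(x) − φ(x̂)‖²_S + ρ̂, where ρ̂ := bᵀ V⁻¹ b + ξ_c − (Aᵀ V⁻¹ b − ξ_l)ᵀ S⁻¹ (Aᵀ V⁻¹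 b − ξ_l). -/
/-!
Completing the square. Write `u = φ x`, `W = V⁻¹` and `c = Aᵀ W b − ξ_l`, so that `S φ(x̂) = c`.
The residual expands to `uᵀ (Aᵀ W A) u − 2 uᵀ Aᵀ W b + bᵀ W b`, and
`‖u − φ(x̂)‖²_S = uᵀ S u − 2 uᵀ c + cᵀ S⁻¹ c`. Substituting `S = Aᵀ W A + ξ_Q`, the two sides of the
claimed identity differ by exactly `ξ_c + 2 ξ_lᵀ u + uᵀ ξ_Q u = ∑ j, h_j(x) g_j(x)`, which vanishes
on the feasible set.
-/

open Matrix

namespace Matrix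

variable {ι κ ν R : Type*} [Fintype ι] [CommRing R]

theorem IsSymm.dotProduct_mulVec_comm {M : Matrix ι ι R} (hM : M.IsSymm) (u w : ι → R) :
    u ⬝ᵥ M *ᵥ w = w ⬝ᵥ M *ᵥ u := by
  rw [dotProduct_mulVec, ← mulVec_transpose, hM.eq, dotProduct_comm]

theorem IsSymm.dotProduct_mulVec_sub_sub {M : Matrix ι ι R} (hM : M.IsSymm) (x y : ι → R) :
    (x - y) ⬝ᵥ M *ᵥ (x - y) = x ⬝ᵥ M *ᵥ x - 2 * (x ⬝ᵥ M *ᵥ y) + y ⬝ᵥ M *ᵥ y := by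
  simp only [mulVec_sub, dotProduct_sub, sub_dotProduct, hM.dotProduct_mulVec_comm y x]
  ring

theorem mulVec_dotProduct_mulVec [Fintype κ] [Fintype ν] (A : Matrix ι κ R)
    (M : Matrix ι ν R) (u : κ → R) (v : ν → R) :
    A *ᵥ u ⬝ᵥ M *ᵥ v = u ⬝ᵥ (Aᵀ * M) *ᵥ v := by
  rw [dotProduct_comm, dotProduct_mulVec, ← mulVec_transpose, dotProduct_comm, mulVec_mulVec]

theorem IsSymm.dotProduct_mulVec_mulVec_sub [Fintype κ] {W : Matrix ι ι R} (hW : W.IsSymm)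
    (A : Matrix ι κ R) (u : κ → R) (b : ι → R) :
    (A *ᵥ u - b) ⬝ᵥ W *ᵥ (A *ᵥ u - b) =
      u ⬝ᵥ (Aᵀ * W * A) *ᵥ u - 2 * (u ⬝ᵥ (Aᵀ * W) *ᵥ b) + b ⬝ᵥ W *ᵥ b := by
  rw [hW.dotProduct_mulVec_sub_sub, mulVec_dotProduct_mulVec, mulVec_dotProduct_mulVec,
    mulVec_mulVec]

end Matrix

theorem bpue_sos_belief_constrained_general {p m n s : ℕ}
    (A : Matrix (Fin p) (Fin m) ℝ) (V : Matrix (Fin p) (Fin p) ℝ) (b : Fin p → ℝ)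
    (φ : (Fin n → ℝ) → (Fin m → ℝ))
    (g h : Fin s → (Fin n → ℝ) → ℝ)
    (hV : V.PosDef)
    (ξc : ℝ) (ξl : Fin m → ℝ) (ξQ : Matrix (Fin m) (Fin m) ℝ)
    (hpoly : ∀ x : Fin n → ℝ,
      ξc + 2 * (ξl ⬝ᵥ φ x) + φ x ⬝ᵥ ξQ.mulVec (φ x) = ∑ j, h j x * g j x)
    (S : Matrix (Fin m) (Fin m) ℝ) (hS : S = Aᵀ * V⁻¹ * A + ξQ)
    (hSpd : S.PosDef)
    (xh : Fin n → ℝ)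
    (hxh : φ xh = S⁻¹.mulVec ((Aᵀ * V⁻¹).mulVec b - ξl))
    (rh : ℝ)
    (hrh : rh = b ⬝ᵥ V⁻¹.mulVec b + ξc -
      ((Aᵀ * V⁻¹).mulVec b - ξl) ⬝ᵥ S⁻¹.mulVec ((Aᵀ * V⁻¹).mulVec b - ξl)) :
    ∀ x : Fin n → ℝ, (∀ j, g j x = 0) →
      (A.mulVec (φ x) - b) ⬝ᵥ V⁻¹.mulVec (A.mulVec (φ x) - b) =
        (φ x - φ xh) ⬝ᵥ S.mulVec (φ x - φ xh) + rh := by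
  intro x hx
  have hVinv : (V⁻¹).IsSymm := isHermitian_iff_isSymm.mp hV.inv.isHermitian
  have hSsymm : S.IsSymm := isHermitian_iff_isSymm.mp hSpd.isHermitian
  have hSxh : S *ᵥ φ xh = (Aᵀ * V⁻¹) *ᵥ b - ξl := by
    rw [hxh, mulVec_mulVec, mul_nonsing_inv _ ((isUnit_iff_isUnit_det S).mp hSpd.isUnit),
      one_mulVec]
  have hconstraint : ξc + 2 * (ξl ⬝ᵥ φ x) + φ x ⬝ᵥ ξQ *ᵥ φ x = 0 := by
    rw [hpoly]
    exact Finset.sum_eq_zero fun j _ ↦ by rw [hx j, mul_zero]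
  rw [hVinv.dotProduct_mulVec_mulVec_sub, hSsymm.dotProduct_mulVec_sub_sub, hSxh, hrh,
    dotProduct_comm (φ xh), hxh, hS, add_mulVec, dotProduct_add, dotProduct_sub,
    dotProduct_comm (φ x) ξl]
  linear_combination -hconstraint

/-- SOS Belief of Constrained BPUE, Appendix H: if the correction
polynomial equals the multiplier combination `∑ j, h_j(x) g_j(x)` for all `x`,
`S := Aᵀ V⁻¹ A + ξ_Q ≻ 0` and `φ(x̂) = S⁻¹ (Aᵀ V⁻¹ b − ξ_l)`, then for every
feasible `x` (i.e. `g_j(x) = 0` for all `j`),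
`‖A φ(x) − b‖²_{V⁻¹} = ‖φ(x) − φ(x̂)‖²_S + ρ̂`, with
`ρ̂ = bᵀ V⁻¹ b + ξ_c − (Aᵀ V⁻¹ b − ξ_l)ᵀ S⁻¹ (Aᵀ V⁻¹ b − ξ_l)`. -/
theorem bpue_sos_belief_constrained {p m n s : ℕ}
    (A : Matrix (Fin p) (Fin m) ℝ) (V : Matrix (Fin p) (Fin p) ℝ) (b : Fin p → ℝ)
    (φ : (Fin n → ℝ) → (Fin m → ℝ))
    (g h : Fin s → (Fin n → ℝ) → ℝ)
    (hV : V.PosDef)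
    (ξc : ℝ) (ξl : Fin m → ℝ) (ξQ : Matrix (Fin m) (Fin m) ℝ) (hξQ : ξQ.IsSymm)
    (hpoly : ∀ x : Fin n → ℝ,
      ξc + 2 * (ξl ⬝ᵥ φ x) + φ x ⬝ᵥ ξQ.mulVec (φ x) = ∑ j, h j x * g j x)
    (S : Matrix (Fin m) (Fin m) ℝ) (hS : S = Aᵀ * V⁻¹ * A + ξQ)
    (hSpd : S.PosDef)
    (xh : Fin n → ℝ)
    (hxh : φ xh = S⁻¹.mulVec ((Aᵀ * V⁻¹).mulVec b - ξl))
    (rh : ℝ)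
    (hrh : rh = b ⬝ᵥ V⁻¹.mulVec b + ξc -
      ((Aᵀ * V⁻¹).mulVec b - ξl) ⬝ᵥ S⁻¹.mulVec ((Aᵀ * V⁻¹).mulVec b - ξl)) :
    ∀ x : Fin n → ℝ, (∀ j, g j x = 0) →
      (A.mulVec (φ x) - b) ⬝ᵥ V⁻¹.mulVec (A.mulVec (φ x) - b) =
        (φ x - φ xh) ⬝ᵥ S.mulVec (φ x - φ xh) + rh :=
  bpue_sos_belief_constrained_general A V b φ g h hV ξc ξl ξQ hpoly S hS hSpd xh hxh rh hrh
end
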